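/- Let f = Σ_{r=0}^n x_r^{d_1} g_r be a CW-Nagata polynomial of bidegree (d_1,d_2) with d_1 ≥ 2. For every i with 1 ≤ i ≤ d_1−1 and every j with 1 ≤ j ≤ d_2, the classes in A_{(i,j)} of the monomials X_s^i · U_1^{s_1}⋯U_m^{s_m}, where s ∈ {0,…,n}, s_1+⋯+s_m = j and u_1^{s_1}⋯u_m^{s_m} divides g_s, form a K-basis of A_{(i,j)}; in particular dim_K A_{(i,j)} = Σ_{r=0}^n f_{j,r}, where f_{j,r} is the number of monic monomials of degree j in u_1,…,u_m dividing g_r. -/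

import Mathlib

open MvPolynomial

namespace CW

variable {σ K : Type*} [CommSemiring K]

/-- A generic "monomial contraction-type" action of the polynomial ring on itself,
determined by a structure coefficient `ν c a` (the coefficient produced when the
operator monomial with exponent `a` acts on the monomial with exponent `c`). -/
noncomputable def genAct (ν : (σ →₀ ℕ) → (σ →₀ ℕ) → K) (α f : MvPolynomial σ K) :
    MvPolynomial σ K :=
  Finsupp.sum (AddMonoidAlgebra.coeff α) fun a ca => Finsupp.sum (AddMonoidAlgebra.coeff f) fun c cf => monomial (c - a) (ν c a * (ca * cf))

theorem genAct_zero_left (ν : (σ →₀ ℕ) → (σ →₀ ℕ) → K) (f : MvPolynomial σ K) :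
    genAct ν 0 f = 0 :=
  Finsupp.sum_zero_index

theorem genAct_zero_right (ν : (σ →₀ ℕ) → (σ →₀ ℕ) → K) (α : MvPolynomial σ K) :
    genAct ν α 0 = 0 := by
  unfold genAct
  simp only [AddMonoidAlgebra.coeff_zero, Finsupp.sum_zero_index, Finsupp.sum_fun_zero]

theorem genAct_add_left (ν : (σ →₀ ℕ) → (σ →₀ ℕ) → K) (α β f : MvPolynomial σ K) :
    genAct ν (α + β) f = genAct ν α f + genAct ν β f := by
  unfold genAct
  apply Finsupp.sum_add_index'
  · intro a
    simp only [mul_zero, zero_mul, map_zero, Finsupp.sum_fun_zero]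
  · intro a b₁ b₂
    rw [← Finsupp.sum_add]
    apply Finsupp.sum_congr
    intro c _
    rw [add_mul, mul_add, map_add]

theorem genAct_add_right (ν : (σ →₀ ℕ) → (σ →₀ ℕ) → K) (α f g : MvPolynomial σ K) :
    genAct ν α (f + g) = genAct ν α f + genAct ν α g := by
  unfold genAct
  rw [← Finsupp.sum_add]
  apply Finsupp.sum_congr
  intro a _
  apply Finsupp.sum_add_index'
  · intro c
    simp only [mul_zero, map_zero]
  · intro c c₁ c₂
    rw [mul_add, mul_add, map_add]

theorem genAct_monomial (ν : (σ →₀ ℕ) → (σ →₀ ℕ) → K) (a c : σ →₀ ℕ) (r s : K) :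
    genAct ν (monomial a r) (monomial c s) = monomial (c - a) (ν c a * (r * s)) := by
  unfold genAct
  rw [← single_eq_monomial a r, ← single_eq_monomial c s]
  rw [AddMonoidAlgebra.coeff_single, AddMonoidAlgebra.coeff_single,
    Finsupp.sum_single_index, Finsupp.sum_single_index]
  · simp only [mul_zero, map_zero]
  · simp only [mul_zero, zero_mul, map_zero, Finsupp.sum_fun_zero]

theorem genAct_mul {ν : (σ →₀ ℕ) → (σ →₀ ℕ) → K}
    (hν : ∀ c a b, ν c (a + b) = ν c b * ν (c - b) a) (α β f : MvPolynomial σ K) :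
    genAct ν (α * β) f = genAct ν α (genAct ν β f) := by
  induction α using MvPolynomial.induction_on' with
  | add p q hp hq => rw [add_mul, genAct_add_left, hp, hq, genAct_add_left]
  | monomial a r =>
    induction β using MvPolynomial.induction_on' with
    | add p q hp hq =>
      rw [mul_add, genAct_add_left, hp, hq, ← genAct_add_right, genAct_add_left]
    | monomial b s =>
      induction f using MvPolynomial.induction_on' with
      | add p q hp hq =>
        rw [genAct_add_right, hp, hq, ← genAct_add_right, ← genAct_add_right]
      | monomial c t =>
        rw [monomial_mul, genAct_monomial, genAct_monomial, genAct_monomial,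
          show c - (a + b) = c - b - a from by rw [tsub_tsub, add_comm], hν]
        congr 1
        ring

/-- The annihilator ideal of `f` under the action `genAct ν`. -/
noncomputable def annG (ν : (σ →₀ ℕ) → (σ →₀ ℕ) → K)
    (hν : ∀ c a b, ν c (a + b) = ν c b * ν (c - b) a) (f : MvPolynomial σ K) :
    Ideal (MvPolynomial σ K) where
  carrier := {α | genAct ν α f = 0}
  zero_mem' := genAct_zero_left ν f
  add_mem' := by
    intro a b ha hb
    show genAct ν (a + b) f = 0
    rw [genAct_add_left, ha, hb, add_zero]
  smul_mem' := by
    intro c α hα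
    show genAct ν (c * α) f = 0
    rw [genAct_mul hν, hα, genAct_zero_right]

/-- Structure coefficient of the contraction (apolarity) action: `X^a` sends `x^c`
to `x^(c-a)` if `a ≤ c` and to `0` otherwise. -/
noncomputable def cnu (c a : σ →₀ ℕ) : K :=
  open scoped Classical in if a ≤ c then 1 else 0

theorem cnu_mul (c a b : σ →₀ ℕ) :
    (cnu c (a + b) : K) = cnu c b * cnu (c - b) a := by
  classical
  unfold cnu
  by_cases hb : b ≤ c
  · by_cases ha : a ≤ c - b
    · have h : a + b ≤ c := (le_tsub_iff_right hb).mp ha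
      simp [hb, ha, h]
    · have h : ¬ a + b ≤ c := fun h => ha ((le_tsub_iff_right hb).mpr h)
      simp [hb, ha, h]
  · have h : ¬ a + b ≤ c := fun h => hb (le_trans le_add_self h)
    simp [hb, h]

/-- The contraction action `α ∘ f`. -/
noncomputable def cAct (α f : MvPolynomial σ K) : MvPolynomial σ K :=
  genAct cnu α f

/-- The annihilator `Ann(f)` of `f` under the contraction action, as an ideal. -/
noncomputable def cAnn (f : MvPolynomial σ K) : Ideal (MvPolynomial σ K) :=
  annG cnu cnu_mul f

theorem mem_cAnn {f α : MvPolynomial σ K} : α ∈ cAnn f ↔ cAct α f = 0 := Iff.rfl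

/-- The `K`-submodule of polynomials all of whose monomials satisfy `P`. -/
noncomputable def bihom (K : Type*) [CommSemiring K] {σ : Type*} (P : (σ →₀ ℕ) → Prop) :
    Submodule K (MvPolynomial σ K) where
  carrier := {p | ∀ c ∈ p.support, P c}
  zero_mem' := by
    intro c hc
    simp at hc
  add_mem' := by
    classical
    intro p q hp hq c hc
    rcases Finset.mem_union.mp (MvPolynomial.support_add hc) with h | h
    · exact hp c h
    · exact hq c h
  smul_mem' := by
    intro k p hp c hc
    exact hp c (MvPolynomial.support_smul hc)

/-- The x-degree of an exponent vector. -/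
def degX {n m : ℕ} (c : (Fin (n + 1) ⊕ Fin m) →₀ ℕ) : ℕ := ∑ r, c (Sum.inl r)

/-- The u-degree of an exponent vector. -/
def degU {n m : ℕ} (c : (Fin (n + 1) ⊕ Fin m) →₀ ℕ) : ℕ := ∑ k, c (Sum.inr k)

/-- The bihomogeneous component `T_(i,j)`. -/
noncomputable def Tbi (K : Type*) [CommSemiring K] {n m : ℕ} (i j : ℕ) :
    Submodule K (MvPolynomial (Fin (n + 1) ⊕ Fin m) K) :=
  bihom K fun c => degX c = i ∧ degU c = j

/-- The bigraded component `A_(i,j)` of `A = T ⧸ Ann(f)`: the image of `T_(i,j)`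
in the quotient. -/
noncomputable def Abi {K : Type*} [Field K] {n m : ℕ}
    (f : MvPolynomial (Fin (n + 1) ⊕ Fin m) K) (i j : ℕ) :
    Submodule K (MvPolynomial (Fin (n + 1) ⊕ Fin m) K ⧸ cAnn f) :=
  (Tbi K i j).map (Ideal.Quotient.mkₐ K (cAnn f)).toLinearMap

/-!
Write `E_r = d₁ e_r + g_r` for the exponent of the `r`-th term of `f`. A monomial `X^a` contracts
`f` to `∑_{a ≤ E_r} x^(E_r - a)`. When `a` has bidegree `(i, j)` with `i ≥ 1`, its `X`-part
forces `a = i e_r + s` for the unique `r` with `a ≤ E_r`, and then `s ≤ g_r`; every other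
monomial of that bidegree lies in `Ann(f)`. The listed monomials are sent to the monomials
`x_r^(d₁ - i) u^(g_r - s)`, which are pairwise distinct because `d₁ - i ≥ 1` still records `r`;
so their classes are linearly independent in `A` and span `A_(i,j)`.
-/

section Contraction

variable {σ K : Type*} [CommSemiring K]

theorem cAct_monomial (a c : σ →₀ ℕ) (r s : K) :
    cAct (monomial a r) (monomial c s) = if a ≤ c then monomial (c - a) (r * s) else 0 := by
  classical
  rw [cAct, genAct_monomial, cnu]
  split_ifs <;> simp

theorem cAct_finset_sum_right {ι : Type*} (α : MvPolynomial σ K) (s : Finset ι)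
    (F : ι → MvPolynomial σ K) :
    cAct α (∑ x ∈ s, F x) = ∑ x ∈ s, cAct α (F x) :=
  map_sum (⟨⟨cAct α, genAct_zero_right cnu α⟩, genAct_add_right cnu α⟩ :
    MvPolynomial σ K →+ MvPolynomial σ K) F s

theorem cAct_C_left (k : K) (f : MvPolynomial σ K) : cAct (C k) f = k • f := by
  induction f using MvPolynomial.induction_on' with
  | monomial c t =>
    rw [← monomial_zero', cAct_monomial, if_pos (zero_le : 0 ≤ c), tsub_zero, smul_monomial,
      smul_eq_mul]
  | add p q hp hq => rw [cAct, genAct_add_right, ← cAct, ← cAct, hp, hq, smul_add]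

noncomputable def cActLeft (f : MvPolynomial σ K) : MvPolynomial σ K →ₗ[K] MvPolynomial σ K where
  toFun α := cAct α f
  map_add' α β := genAct_add_left cnu α β f
  map_smul' k α := by
    rw [smul_eq_C_mul, cAct, genAct_mul cnu_mul, ← cAct, ← cAct, cAct_C_left, RingHom.id_apply]

theorem cActLeft_apply (f α : MvPolynomial σ K) : cActLeft f α = cAct α f := rfl

theorem bihom_eq_span (P : (σ →₀ ℕ) → Prop) :
    bihom K P = Submodule.span K ((monomial · 1) '' {c | P c}) := by
  rw [← restrictSupport_eq_span]
  rfl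

end Contraction

section Quotient

variable {σ K : Type*} [CommRing K]

theorem linearIndependent_mk_cAnn {ι : Type*} {f : MvPolynomial σ K} {w : ι → MvPolynomial σ K}
    (h : LinearIndependent K fun p => cAct (w p) f) :
    LinearIndependent K fun p => Ideal.Quotient.mk (cAnn f) (w p) := by
  rw [linearIndependent_iff'] at h ⊢
  intro s c hc
  have hmem : ∑ p ∈ s, c p • w p ∈ cAnn f := by
    rw [← Ideal.Quotient.eq_zero_iff_mem, ← hc]
    simp only [map_sum, ← Ideal.Quotient.mkₐ_eq_mk K, map_smul]
  refine h s c ?_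
  simpa only [mem_cAnn, ← cActLeft_apply, map_sum, map_smul] using hmem

end Quotient

section Exponent

open Finsupp

variable {α β : Type*}

/-- The exponent vector of `X_r ^ i * U ^ s`. -/
noncomputable def xuExp (r : α) (i : ℕ) (s : β →₀ ℕ) : α ⊕ β →₀ ℕ := sumElim (single r i) s

@[simp]
theorem xuExp_inl (r r' : α) (i : ℕ) (s : β →₀ ℕ) : xuExp r i s (.inl r') = single r i r' := rfl

@[simp]
theorem xuExp_inr (r : α) (i : ℕ) (s : β →₀ ℕ) (k : β) : xuExp r i s (.inr k) = s k := rfl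

theorem xuExp_eq_add (r : α) (i : ℕ) (s : β →₀ ℕ) :
    xuExp r i s = single (.inl r) i + s.mapDomain .inr := by
  rw [xuExp, sumElim_eq_add, mapDomain_single]

theorem xuExp_le_xuExp_iff {r r' : α} {i d : ℕ} {s t : β →₀ ℕ} (hi : i ≠ 0) :
    xuExp r i s ≤ xuExp r' d t ↔ r = r' ∧ i ≤ d ∧ s ≤ t := by
  classical
  have hsingle : single r i ≤ single r' d ↔ r = r' ∧ i ≤ d := by
    rw [single_le_iff, single_apply]
    split_ifs with h
    · simp [h]
    · simp [Ne.symm h, hi]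
  rw [Finsupp.le_def, Sum.forall]
  simp only [xuExp_inl, xuExp_inr]
  rw [← Finsupp.le_def, ← Finsupp.le_def, hsingle, and_assoc]

theorem le_xuExp_iff {a : α ⊕ β →₀ ℕ} {r : α} {d : ℕ} {t : β →₀ ℕ} :
    a ≤ xuExp r d t ↔ ∃ k ≤ d, ∃ s ≤ t, a = xuExp r k s := by
  classical
  constructor
  · intro ha
    have hinl : ∀ r', a (.inl r') ≤ single r d r' := fun r' => ha (.inl r')
    refine ⟨a (.inl r), by simpa using hinl r, a.comapDomain .inr Sum.inr_injective.injOn,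
      fun k => by simpa using ha (.inr k), ?_⟩
    ext (r' | k)
    · by_cases h : r = r'
      · simp [h]
      · simpa [single_apply, h] using hinl r'
    · rfl
  · rintro ⟨k, hk, s, hs, rfl⟩ (r' | k')
    · simp only [xuExp_inl, single_apply]
      split_ifs <;> omega
    · exact hs k'

theorem xuExp_sub_xuExp (r : α) (d i : ℕ) (t s : β →₀ ℕ) :
    xuExp r d t - xuExp r i s = xuExp r (d - i) (t - s) := by
  ext (r' | k) <;> simp [single_tsub]

theorem xuExp_injective {r r' : α} {i i' : ℕ} {s s' : β →₀ ℕ} (hi : i ≠ 0)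
    (h : xuExp r i s = xuExp r' i' s') : r = r' ∧ i = i' ∧ s = s' := by
  have hsingle : single r i = single r' i' := Finsupp.ext fun x => DFunLike.congr_fun h (.inl x)
  simp only [single_eq_single_iff, hi, false_and, or_false] at hsingle
  exact ⟨hsingle.1, hsingle.2, Finsupp.ext fun k => DFunLike.congr_fun h (.inr k)⟩

end Exponent

section CWNagata

variable {α β K : Type*} [CommSemiring K]

theorem X_pow_mul_monomial_mapDomain_inr (r : α) (i : ℕ) (s : β →₀ ℕ) :
    (X (.inl r) : MvPolynomial (α ⊕ β) K) ^ i * monomial (s.mapDomain .inr) 1 =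
      monomial (xuExp r i s) 1 := by
  rw [X_pow_eq_monomial, monomial_mul, one_mul, xuExp_eq_add]

/-- The CW-Nagata polynomial `∑ r, x_r ^ d * u ^ (g r)`. -/
noncomputable def cwNagata (K : Type*) [CommSemiring K] [Fintype α] (d : ℕ) (g : α → β →₀ ℕ) :
    MvPolynomial (α ⊕ β) K :=
  ∑ r, monomial (xuExp r d (g r)) 1

variable [Fintype α] {d : ℕ} {g : α → β →₀ ℕ}

theorem cAct_monomial_cwNagata (a : α ⊕ β →₀ ℕ) :
    cAct (monomial a (1 : K)) (cwNagata K d g) =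
      ∑ r, if a ≤ xuExp r d (g r) then monomial (xuExp r d (g r) - a) 1 else 0 := by
  simp only [cwNagata, cAct_finset_sum_right, cAct_monomial, mul_one]

theorem cAct_monomial_xuExp_cwNagata {r : α} {i : ℕ} {s : β →₀ ℕ} (hi : i ≠ 0) (hid : i ≤ d)
    (hs : s ≤ g r) :
    cAct (monomial (xuExp r i s) (1 : K)) (cwNagata K d g) =
      monomial (xuExp r (d - i) (g r - s)) 1 := by
  rw [cAct_monomial_cwNagata, Finset.sum_eq_single r]
  · rw [if_pos ((xuExp_le_xuExp_iff hi).2 ⟨rfl, hid, hs⟩), xuExp_sub_xuExp]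
  · exact fun r' _ hr' => if_neg fun h => hr' ((xuExp_le_xuExp_iff hi).1 h).1.symm
  · simp

theorem cAct_monomial_cwNagata_eq_zero {a : α ⊕ β →₀ ℕ} (h : ∀ r, ¬ a ≤ xuExp r d (g r)) :
    cAct (monomial a (1 : K)) (cwNagata K d g) = 0 := by
  rw [cAct_monomial_cwNagata]
  exact Finset.sum_eq_zero fun r _ => if_neg (h r)

end CWNagata

section Bigraded

variable {K : Type*} [Field K] {n m : ℕ}

theorem degX_xuExp (r : Fin (n + 1)) (i : ℕ) (s : Fin m →₀ ℕ) : degX (xuExp r i s) = i := by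
  simp [degX]

theorem degU_xuExp (r : Fin (n + 1)) (i : ℕ) (s : Fin m →₀ ℕ) :
    degU (xuExp r i s) = ∑ k, s k := rfl

abbrev CWIndex (g : Fin (n + 1) → Fin m →₀ ℕ) (j : ℕ) :=
  {p : Fin (n + 1) × (Fin m →₀ ℕ) // (∑ k, p.2 k) = j ∧ p.2 ≤ g p.1}

variable {d i j : ℕ} {g : Fin (n + 1) → Fin m →₀ ℕ}

theorem linearIndependent_mk_xuExp (hi : i ≠ 0) (hid : i < d) :
    LinearIndependent K fun p : CWIndex g j =>
      Ideal.Quotient.mk (cAnn (cwNagata K d g)) (monomial (xuExp p.1.1 i p.1.2) 1) := by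
  apply linearIndependent_mk_cAnn
  have hinj : Function.Injective fun p : CWIndex g j => xuExp p.1.1 (d - i) (g p.1.1 - p.1.2) := by
    intro ⟨⟨r, s⟩, _, hs⟩ ⟨⟨r', s'⟩, _, hs'⟩ h
    obtain ⟨rfl, -, hsub⟩ := xuExp_injective (by omega) h
    simp only [Subtype.mk.injEq, Prod.mk.injEq, true_and]
    dsimp only at hs hs' hsub
    rw [← tsub_tsub_cancel_of_le hs, hsub, tsub_tsub_cancel_of_le hs']
  have hcAct : (fun p : CWIndex g j => cAct (monomial (xuExp p.1.1 i p.1.2) 1) (cwNagata K d g)) =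
      (fun c => monomial c (1 : K)) ∘ fun p : CWIndex g j => xuExp p.1.1 (d - i) (g p.1.1 - p.1.2) :=
    funext fun p => cAct_monomial_xuExp_cwNagata hi hid.le p.2.2
  rw [hcAct]
  exact (basisMonomials _ K).linearIndependent.comp _ hinj

theorem Abi_cwNagata_eq_span (hi : i ≠ 0) :
    Abi (cwNagata K d g) i j = Submodule.span K (Set.range fun p : CWIndex g j =>
      Ideal.Quotient.mk (cAnn (cwNagata K d g)) (monomial (xuExp p.1.1 i p.1.2) 1)) := by
  rw [Abi, Tbi, bihom_eq_span, Submodule.map_span, Set.image_image]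
  apply le_antisymm
  · rw [Submodule.span_le]
    rintro _ ⟨c, ⟨hX, hU⟩, rfl⟩
    by_cases h : ∃ r, c ≤ xuExp r d (g r)
    · obtain ⟨r, hr⟩ := h
      obtain ⟨k, -, s, hs, rfl⟩ := le_xuExp_iff.1 hr
      rw [degX_xuExp] at hX
      rw [degU_xuExp] at hU
      subst hX
      exact Submodule.subset_span ⟨⟨(r, s), hU, hs⟩, rfl⟩
    · push Not at h
      have hc : Ideal.Quotient.mk (cAnn (cwNagata K d g)) (monomial c 1) = 0 :=
        Ideal.Quotient.eq_zero_iff_mem.2 (mem_cAnn.2 (cAct_monomial_cwNagata_eq_zero h))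
      simp only [AlgHom.toLinearMap_apply, Ideal.Quotient.mkₐ_eq_mk, hc, SetLike.mem_coe,
        Submodule.zero_mem]
  · refine Submodule.span_mono ?_
    rintro _ ⟨p, rfl⟩
    exact ⟨xuExp p.1.1 i p.1.2, ⟨degX_xuExp .., (degU_xuExp ..).trans p.2.1⟩, rfl⟩

noncomputable def basisAbiCwNagata (hi : i ≠ 0) (hid : i < d) :
    Module.Basis (CWIndex g j) K (Abi (cwNagata K d g) i j) :=
  (Module.Basis.span (linearIndependent_mk_xuExp hi hid)).map
    (LinearEquiv.ofEq _ _ (Abi_cwNagata_eq_span hi).symm)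

theorem basisAbiCwNagata_apply (hi : i ≠ 0) (hid : i < d) (p : CWIndex g j) :
    (basisAbiCwNagata (K := K) hi hid p : MvPolynomial (Fin (n + 1) ⊕ Fin m) K ⧸ cAnn (cwNagata K d g)) =
      Ideal.Quotient.mk (cAnn (cwNagata K d g)) (monomial (xuExp p.1.1 i p.1.2) 1) := by
  simp [basisAbiCwNagata, Module.Basis.span_apply]

theorem natCard_CWIndex (g : Fin (n + 1) → Fin m →₀ ℕ) (j : ℕ) :
    Nat.card (CWIndex g j) = ∑ r, ((Finset.Iic (g r)).filter fun s => (∑ k, s k) = j).card := by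
  rw [Nat.card_congr ((Equiv.subtypeEquivRight fun p => ?_).trans
    (Equiv.subtypeProdEquivSigmaSubtype fun r s =>
      s ∈ (Finset.Iic (g r)).filter fun s => (∑ k, s k) = j)), Nat.card_sigma]
  · simp only [Nat.card_eq_fintype_card, Fintype.card_coe]
  · simp [and_comm]

end Bigraded

theorem stmt_1_general {K : Type*} [Field K] (n m d₁ : ℕ)
    (g : Fin (n + 1) → (Fin m →₀ ℕ))
    (f : MvPolynomial (Fin (n + 1) ⊕ Fin m) K)
    (hf : f = ∑ r, MvPolynomial.X (Sum.inl r) ^ d₁ *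
      MvPolynomial.monomial ((g r).mapDomain Sum.inr) 1)
    (i j : ℕ) (hi : 1 ≤ i) (hid : i ≤ d₁ - 1) :
    (∃ b : Module.Basis {p : Fin (n + 1) × (Fin m →₀ ℕ) // (∑ k, p.2 k) = j ∧ p.2 ≤ g p.1} K
        (Abi f i j),
      ∀ p, (b p : MvPolynomial (Fin (n + 1) ⊕ Fin m) K ⧸ cAnn f) =
        Ideal.Quotient.mk (cAnn f)
          (MvPolynomial.X (Sum.inl (p : Fin (n + 1) × (Fin m →₀ ℕ)).1) ^ i *
            MvPolynomial.monomial ((p : Fin (n + 1) × (Fin m →₀ ℕ)).2.mapDomain Sum.inr) 1)) ∧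
    Module.finrank K (Abi f i j) =
      ∑ r, ((Finset.Iic (g r)).filter fun s => (∑ k, s k) = j).card := by
  simp only [X_pow_mul_monomial_mapDomain_inr] at hf ⊢
  change f = cwNagata K d₁ g at hf
  subst hf
  have hi₀ : i ≠ 0 := by omega
  have hid₀ : i < d₁ := by omega
  refine ⟨⟨basisAbiCwNagata hi₀ hid₀, basisAbiCwNagata_apply hi₀ hid₀⟩, ?_⟩
  rw [Module.finrank_eq_nat_card_basis (basisAbiCwNagata hi₀ hid₀), natCard_CWIndex]

theorem stmt_1 {K : Type*} [Field K] [CharZero K] (n m d₁ d₂ : ℕ)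
    (hd₁ : 2 ≤ d₁) (hd₂ : 2 ≤ d₂)
    (g : Fin (n + 1) → (Fin m →₀ ℕ))
    (hgdeg : ∀ r, (∑ k, g r k) = d₂)
    (hginj : Function.Injective g)
    (f : MvPolynomial (Fin (n + 1) ⊕ Fin m) K)
    (hf : f = ∑ r, MvPolynomial.X (Sum.inl r) ^ d₁ *
      MvPolynomial.monomial ((g r).mapDomain Sum.inr) 1)
    (i j : ℕ) (hi : 1 ≤ i) (hid : i ≤ d₁ - 1) (hj : 1 ≤ j) (hjd : j ≤ d₂) :
    (∃ b : Module.Basis {p : Fin (n + 1) × (Fin m →₀ ℕ) // (∑ k, p.2 k) = j ∧ p.2 ≤ g p.1} K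
        (Abi f i j),
      ∀ p, (b p : MvPolynomial (Fin (n + 1) ⊕ Fin m) K ⧸ cAnn f) =
        Ideal.Quotient.mk (cAnn f)
          (MvPolynomial.X (Sum.inl (p : Fin (n + 1) × (Fin m →₀ ℕ)).1) ^ i *
            MvPolynomial.monomial ((p : Fin (n + 1) × (Fin m →₀ ℕ)).2.mapDomain Sum.inr) 1)) ∧
    Module.finrank K (Abi f i j) =
      ∑ r, ((Finset.Iic (g r)).filter fun s => (∑ k, s k) = j).card :=
  stmt_1_general n m d₁ g f hf i j hi hid

end CW
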